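/- arXiv:1904.12912 — 3 statements merged into one kernel-verified Lean document; each statement's English description precedes it below -/
import Mathlib

section
/- Every multiple-closed set of monomials has a unique minimal generating set: if M is a multiple-closed set of monomials in K[y_1,...,y_n], then there is a unique finite set G of monomials, none of which divides another, whose set of monomial multiples equals M. -/
/-!
The generators are forced: an antichain generating an upper set is exactly the set of its
minimal elements. By Dickson's lemma `ℕⁿ` is well-quasi-ordered, so the minimal elements of `M`
form a finite antichain, and well-foundedness puts every element of `M` above one of them.
-/

theorem isAntichain_le_iff_forall_le_imp_eq {α : Type*} [LE α] {s : Set α} :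
    IsAntichain (· ≤ ·) s ↔ ∀ a ∈ s, ∀ b ∈ s, a ≤ b → a = b :=
  ⟨fun hs _ ha _ hb hab => hs.eq ha hb hab, fun hs _ ha _ hb hne hab => hne (hs _ ha _ hb hab)⟩

theorem mem_upperClosure_iff_exists_add {α : Type*} [AddCommMonoid α] [PartialOrder α]
    [CanonicallyOrderedAdd α] {s : Set α} {x : α} :
    x ∈ upperClosure s ↔ ∃ g ∈ s, ∃ r, x = r + g := by
  simp only [mem_upperClosure, le_iff_exists_add']

theorem isUpperSet_of_forall_add_mem {α : Type*} [AddCommMonoid α] [PartialOrder α]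
    [CanonicallyOrderedAdd α] {s : Set α} (hs : ∀ m ∈ s, ∀ r, r + m ∈ s) :
    IsUpperSet s := by
  rintro a _ hab ha
  obtain ⟨r, rfl⟩ := le_iff_exists_add'.mp hab
  exact hs a ha r

theorem finite_setOf_minimal_mem {α : Type*} [PartialOrder α] [WellQuasiOrderedLE α]
    (s : Set α) : {x | Minimal (· ∈ s) x}.Finite :=
  (setOfPred_minimal_antichain _).finite_of_wellQuasiOrdered wellQuasiOrdered_le

theorem IsUpperSet.upperClosure_setOf_minimal_mem {α : Type*} [Preorder α] [WellFoundedLT α]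
    {s : Set α} (hs : IsUpperSet s) : ↑(upperClosure {x | Minimal (· ∈ s) x}) = s := by
  ext x
  refine ⟨fun ⟨m, hm, hmx⟩ => hs hmx hm.prop, fun hx => ?_⟩
  obtain ⟨m, hmx, hm⟩ := exists_minimal_le_of_wellFoundedLT (· ∈ s) x hx
  exact ⟨m, hm, hmx⟩

theorem IsAntichain.eq_setOf_minimal_mem_of_upperClosure_eq {α : Type*} [PartialOrder α]
    {G s : Set α} (hG : IsAntichain (· ≤ ·) G) (hGs : ↑(upperClosure G) = s) :
    G = {x | Minimal (· ∈ s) x} := by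
  subst hGs
  ext x
  exact hG.minimal_mem_upperClosure_iff_mem.symm

/-- Every multiple-closed set of monomials has a unique minimal generating set:
a unique finite set `G` of monomials, none of which divides another
(divisibility of monomials is `≤` componentwise on exponent vectors, i.e.
`g ≤ x ↔ ∃ r, x = r + g`), whose set of monomial multiples equals `M`. -/
theorem multiple_closed_unique_minimal_generating_set (n : ℕ) (M : Set (Fin n → ℕ))
    (hM : ∀ m ∈ M, ∀ r : Fin n → ℕ, r + m ∈ M) :
    ∃! G : Finset (Fin n → ℕ),
      (∀ g ∈ G, ∀ g' ∈ G, g ≤ g' → g = g') ∧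
      M = { x | ∃ g ∈ G, ∃ r : Fin n → ℕ, x = r + g } := by
  have generated_eq (G : Finset (Fin n → ℕ)) :
      { x | ∃ g ∈ G, ∃ r : Fin n → ℕ, x = r + g } =
        upperClosure (G : Set (Fin n → ℕ)) := by
    ext x
    simp only [Set.mem_ofPred_eq, SetLike.mem_coe, mem_upperClosure_iff_exists_add]
  have hminimal := finite_setOf_minimal_mem M
  refine ⟨hminimal.toFinset, ⟨?_, ?_⟩, fun G ⟨hG, hGM⟩ => ?_⟩
  · have hanti := setOfPred_minimal_antichain (· ∈ M)
    rw [← hminimal.coe_toFinset, isAntichain_le_iff_forall_le_imp_eq] at hanti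
    exact hanti
  · rw [generated_eq, hminimal.coe_toFinset,
      (isUpperSet_of_forall_add_mem hM).upperClosure_setOf_minimal_mem]
  · rw [← Finset.coe_inj, hminimal.coe_toFinset]
    exact (isAntichain_le_iff_forall_le_imp_eq.mpr hG).eq_setOf_minimal_mem_of_upperClosure_eq
      (generated_eq G ▸ hGM).symm
end

section
/- For a monomial ideal interpretation of Janet division: given a finite set G of monomials in y_1,...,y_n, where for m = y_1^{i_1}···y_n^{i_n} ∈ G the variable y_k is multiplicative for m iff i_k = max{ j_k : y_1^{j_1}···y_n^{j_n} ∈ G with j_1 = i_1, ..., j_{k-1} = i_{k-1} }, the cones Mon(μ(m,G))·m for distinct m ∈ G are pairwise disjoint. -/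
open Finset in
/-- Janet multiplicative variables: for `m ∈ G` (monomials identified with
exponent vectors in `ℕⁿ`), the variable `k` is multiplicative for `m` iff the
exponent `m k` is maximal among the exponents `j k` of those `j ∈ G` agreeing
with `m` in all earlier positions. -/
def JanetMultiplicative (n : ℕ) (G : Finset (Fin n → ℕ)) (m : Fin n → ℕ)
    (k : Fin n) : Prop :=
  ∀ j ∈ G, (∀ l : Fin n, l < k → j l = m l) → j k ≤ m k

/-- The Janet cone of `m` with respect to `G`: all products of `m` with
monomials involving only multiplicative variables of `m`. -/
def JanetCone (n : ℕ) (G : Finset (Fin n → ℕ)) (m : Fin n → ℕ) :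
    Set (Fin n → ℕ) :=
  { x | ∃ r : Fin n → ℕ,
      (∀ k : Fin n, r k ≠ 0 → JanetMultiplicative n G m k) ∧ x = r + m }

/-- Disjointness in Janet division: the Janet cones of distinct elements of a
finite set `G` of monomials are pairwise disjoint. -/
theorem janet_cones_disjoint (n : ℕ) (G : Finset (Fin n → ℕ))
    (m m' : Fin n → ℕ) (hm : m ∈ G) (hm' : m' ∈ G) (hne : m ≠ m') :
    JanetCone n G m ∩ JanetCone n G m' = ∅ := by
  ext x
  simp only [Set.mem_inter_iff, Set.mem_empty_iff_false, iff_false]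
  rintro ⟨⟨r, hr, rfl⟩, ⟨r', hr', heq⟩⟩
  have heqk : ∀ l : Fin n, r l + m l = r' l + m' l := fun l => congrFun heq l
  -- least index where m and m' differ
  have hne' : ∃ k, m k ≠ m' k := by
    by_contra h
    push_neg at h
    exact hne (funext h)
  obtain ⟨k, hk, hkmin⟩ := Finset.exists_min_image
    (Finset.univ.filter fun k => m k ≠ m' k) id
    (by obtain ⟨k, hk⟩ := hne'; exact ⟨k, Finset.mem_filter.2 ⟨Finset.mem_univ k, hk⟩⟩)
  have hkne : m k ≠ m' k := (Finset.mem_filter.1 hk).2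
  have hagree : ∀ l : Fin n, l < k → m l = m' l := by
    intro l hl
    by_contra hml
    exact absurd (hkmin l (Finset.mem_filter.2 ⟨Finset.mem_univ l, hml⟩)) (not_le.2 hl)
  rcases lt_or_gt_of_ne hkne with hlt | hlt
  · -- m k < m' k, so r k > r' k ≥ 0, so k multiplicative for m, so m' k ≤ m k
    have hrk : r k ≠ 0 := by
      intro h0
      have := heqk k
      omega
    exact absurd (hr k hrk m' hm' fun l hl => (hagree l hl).symm) (not_le.2 hlt)
  · have hrk : r' k ≠ 0 := by
      intro h0
      have := heqk k
      omega
    exact absurd (hr' k hrk m hm fun l hl => hagree l hl) (not_le.2 hlt)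
end

section
/- Polynomial identity witnessing s-consistency of the forward-backward discretization: with C := (ũ_{i+1,j} − ũ_{i,j})/h − ũ_{i,j}² and E := (ũ_{i,j+1} − ũ_{i,j})/h + ũ_{i,j+1}² (the forward difference in the first variable and backward difference in the second, shifted to nonnegative indices), the identity σ_1 E − (h² ũ_{i,j+1}² + h ũ_{i+1,j+1} + h ũ_{i,j+1} + 1) σ_2 C + C − E − h (h ũ_{i,j+1}² + ũ_{i,j+1} + ũ_{i,j}) E = 0 holds as a polynomial identity. -/
open MvPolynomial in
/-- Polynomial identity witnessing s-consistency of the forward-backward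
discretization of `u_x = u²`, `u_y = −u²`. With denominators cleared
(`C' = h·C`, `E' = h·E`), in `ℚ[h, ũ_{i,j}, ũ_{i+1,j}, ũ_{i,j+1}, ũ_{i+1,j+1}]`
(variables `X 0 = h`, `X 1 = ũ_{i,j}`, `X 2 = ũ_{i+1,j}`, `X 3 = ũ_{i,j+1}`,
`X 4 = ũ_{i+1,j+1}`):
`σ₁E' − (h² ũ_{i,j+1}² + h ũ_{i+1,j+1} + h ũ_{i,j+1} + 1)·σ₂C' + C' − E'
  − h (h ũ_{i,j+1}² + ũ_{i,j+1} + ũ_{i,j})·E' = 0`. -/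
theorem forward_backward_s_consistency_identity :
    let h : MvPolynomial (Fin 5) ℚ := X 0
    let u00 : MvPolynomial (Fin 5) ℚ := X 1
    let u10 : MvPolynomial (Fin 5) ℚ := X 2
    let u01 : MvPolynomial (Fin 5) ℚ := X 3
    let u11 : MvPolynomial (Fin 5) ℚ := X 4
    let C : MvPolynomial (Fin 5) ℚ := u10 - u00 - h * u00 ^ 2
    let E : MvPolynomial (Fin 5) ℚ := u01 - u00 + h * u01 ^ 2
    let σ₁E : MvPolynomial (Fin 5) ℚ := u11 - u10 + h * u11 ^ 2
    let σ₂C : MvPolynomial (Fin 5) ℚ := u11 - u01 - h * u01 ^ 2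
    σ₁E - (h ^ 2 * u01 ^ 2 + h * u11 + h * u01 + 1) * σ₂C + C - E
      - h * (h * u01 ^ 2 + u01 + u00) * E = 0 := by
  intros; ring
end
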